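/- arXiv:2512.00791 — 3 statements merged into one kernel-verified Lean document; each statement's English description precedes it below -/
import Mathlib

section
/- Let S be a finite set with |S| = M, let k be a positive integer with k < M, let K ≥ 1 be a real number, and let T be a positive integer with T ≥ K · k / (1 − k/M). If Z_1, …, Z_T are i.i.d. uniformly distributed random elements of S, then the probability that the number of distinct values among Z_1, …, Z_T is at least k is at least 1 − 1/K. -/
/-!
Let `N_t` be the number of distinct values among the first `t` draws. While `N_t < k`, the next
draw is new with probability `(M - N_t)/M ≥ 1 - k/M`, because it is uniform and independent of
the earlier ones (`card_mul_card_filter_apply_mem`). Hence `𝔼[min N_t k]` grows by at least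
`(1 - k/M) ℙ(N_t < k)` per step, and since `ℙ(N_t < k)` is nonincreasing in `t`,
`T (1 - k/M) ℙ(N_T < k) ≤ 𝔼[min N_T k] ≤ k`, i.e. `ℙ(N_T < k) ≤ k / (T (1 - k/M)) ≤ 1/K`.
All probabilities are counted over `S^T`.
-/

open Finset Function

theorem card_mul_card_filter_apply_mem {ι α : Type*} [Fintype ι] [DecidableEq ι]
    [Fintype α] [DecidableEq α] (i : ι) (F : (ι → α) → Finset α)
    (hF : ∀ z a, F (update z i a) = F z) :
    Fintype.card α * #{z | z i ∈ F z} = ∑ z, #(F z) := by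
  have hinv : Involutive fun p : (ι → α) × α => (update p.1 i p.2, p.1 i) := fun p => by simp
  calc Fintype.card α * #{z | z i ∈ F z}
      = ∑ p : (ι → α) × α, if p.1 i ∈ F (update p.1 i p.2) then 1 else 0 := by
        rw [card_filter, mul_sum, Fintype.sum_prod_type]
        simp only [hF, sum_const, card_univ, smul_eq_mul]
    _ = ∑ p : (ι → α) × α, if p.2 ∈ F p.1 then 1 else 0 :=
        (Fintype.sum_equiv (hinv.toPerm _) _ _ fun p => by simp).symm
    _ = ∑ z, #(F z) := by
        simp only [Fintype.sum_prod_type, card_eq_sum_ones, sum_ite_mem, univ_inter]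

section PrefixImage

variable {S : Type*} [DecidableEq S] {T : ℕ}

def prefixImage (z : Fin T → S) (t : ℕ) : Finset S := image z {i | (i : ℕ) < t}

theorem prefixImage_of_le (z : Fin T → S) {t : ℕ} (h : T ≤ t) :
    prefixImage z t = image z univ := by
  unfold prefixImage
  congr
  exact filter_true_of_mem fun i _ => i.isLt.trans_le h

theorem prefixImage_mono (z : Fin T → S) : Monotone (prefixImage z) :=
  fun _ _ h => image_subset_image <| monotone_filter_right _ fun _ _ hi => lt_of_lt_of_le hi h

theorem prefixImage_succ (z : Fin T → S) (i : Fin T) :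
    prefixImage z (i + 1) = insert (z i) (prefixImage z i) := by
  rw [prefixImage, prefixImage, ← image_insert]
  congr
  ext j
  simp [Fin.ext_iff, le_iff_eq_or_lt]

theorem prefixImage_update_of_le (z : Fin T → S) {t : ℕ} (i : Fin T) (hi : t ≤ i) (a : S) :
    prefixImage (update z i a) t = prefixImage z t :=
  image_congr fun j hj => update_of_ne (by rintro rfl; simp at hj; omega) _ _

end PrefixImage

section DistinctCount

variable {S : Type*} [Fintype S] [DecidableEq S] {T : ℕ}

theorem mul_sum_min_card_prefixImage_add_le (k : ℕ) (i : Fin T) :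
    Fintype.card S * ∑ z : Fin T → S, min #(prefixImage z i) k
        + (Fintype.card S - k) * #{z : Fin T → S | #(prefixImage z i) < k}
      ≤ Fintype.card S * ∑ z : Fin T → S, min #(prefixImage z (i + 1)) k := by
  let F : (Fin T → S) → Finset S := fun z =>
    if #(prefixImage z i) < k then (prefixImage z i)ᶜ else ∅
  have hF : ∀ z a, F (update z i a) = F z := fun z a => by
    simp only [F, prefixImage_update_of_le z i le_rfl]
  have hsucc : ∀ z : Fin T → S,
      min #(prefixImage z (i + 1)) k = min #(prefixImage z i) k + if z i ∈ F z then 1 else 0 := by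
    intro z
    rw [prefixImage_succ z i]
    by_cases hz : z i ∈ prefixImage z i
    · simp only [F, insert_eq_of_mem hz]
      split_ifs <;> simp_all
    · simp only [F, card_insert_of_notMem hz]
      split_ifs <;> simp_all <;> omega
  have hfresh : (Fintype.card S - k) * #{z : Fin T → S | #(prefixImage z i) < k}
      ≤ Fintype.card S * #{z | z i ∈ F z} := by
    rw [card_mul_card_filter_apply_mem i F hF, card_filter, mul_sum]
    gcongr with z
    by_cases hz : #(prefixImage z i) < k
    · simp only [F, hz, if_true, card_compl]
      omega
    · simp [F, hz]
  rw [sum_congr rfl fun z _ => hsucc z, sum_add_distrib, ← card_filter, mul_add]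
  exact Nat.add_le_add_left hfresh _

theorem sum_card_filter_card_prefixImage_lt_le (k : ℕ) {t : ℕ} (ht : t ≤ T) :
    (Fintype.card S - k) * ∑ s ∈ range t, #{z : Fin T → S | #(prefixImage z s) < k}
      ≤ Fintype.card S * ∑ z : Fin T → S, min #(prefixImage z t) k := by
  induction t with
  | zero => simp
  | succ t ih =>
    rw [sum_range_succ, mul_add]
    exact (Nat.add_le_add_right (ih (by omega)) _).trans
      (mul_sum_min_card_prefixImage_add_le k ⟨t, ht⟩)

theorem card_filter_card_image_lt_le (k : ℕ) :
    T * (Fintype.card S - k) * #{z : Fin T → S | #(image z univ) < k}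
      ≤ k * Fintype.card S ^ (T + 1) := by
  have hmono : ∀ s ∈ range T, #{z : Fin T → S | #(image z univ) < k}
      ≤ #{z : Fin T → S | #(prefixImage z s) < k} := fun s hs =>
    card_le_card <| monotone_filter_right _ fun z _ hz =>
      (card_le_card (prefixImage_of_le z le_rfl ▸ prefixImage_mono z (mem_range.1 hs).le)).trans_lt hz
  have hcap : ∑ z : Fin T → S, min #(prefixImage z T) k ≤ k * Fintype.card S ^ T := by
    simpa [Fintype.card_fun, mul_comm] using
      sum_le_card_nsmul (univ : Finset (Fin T → S)) _ k fun z _ => min_le_right _ k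
  calc T * (Fintype.card S - k) * #{z : Fin T → S | #(image z univ) < k}
      ≤ (Fintype.card S - k) * ∑ s ∈ range T, #{z : Fin T → S | #(prefixImage z s) < k} := by
        rw [mul_comm T, mul_assoc]
        gcongr
        simpa using card_nsmul_le_sum _ _ _ hmono
    _ ≤ Fintype.card S * ∑ z : Fin T → S, min #(prefixImage z T) k :=
        sum_card_filter_card_prefixImage_lt_le k le_rfl
    _ ≤ k * Fintype.card S ^ (T + 1) := by
        rw [pow_succ']
        nlinarith [hcap]

theorem mul_card_filter_card_image_lt_le {k : ℕ} {K : ℝ} (hkM : k < Fintype.card S)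
    (hT : 0 < T) (hK : 0 ≤ K) (hTK : K * k * Fintype.card S ≤ T * (Fintype.card S - k)) :
    K * #{z : Fin T → S | #(image z univ) < k} ≤ Fintype.card S ^ T := by
  set M := Fintype.card S
  set Bad := #{z : Fin T → S | #(image z univ) < k}
  have hcount : T * (M - k) * (Bad : ℝ) ≤ k * M ^ (T + 1) := by
    rw [← Nat.cast_sub hkM.le]
    exact_mod_cast card_filter_card_image_lt_le k
  have hgap : (0 : ℝ) < T * (M - k) :=
    mul_pos (by exact_mod_cast hT) (sub_pos.2 (by exact_mod_cast hkM))
  refine le_of_mul_le_mul_left ?_ hgap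
  calc T * (M - k) * (K * Bad) = K * (T * (M - k) * Bad) := by ring
    _ ≤ K * (k * M ^ (T + 1)) := by gcongr
    _ = K * k * M * M ^ T := by ring
    _ ≤ T * (M - k) * M ^ T := by gcongr

end DistinctCount

theorem stmt3_general {S : Type*} [Fintype S] [DecidableEq S]
    (M : ℕ) (hM : Fintype.card S = M)
    (k : ℕ) (hkM : k < M)
    (K : ℝ) (hK : 1 ≤ K)
    (T : ℕ) (hT : 0 < T) (hTK : K * (k : ℝ) / (1 - (k : ℝ) / (M : ℝ)) ≤ (T : ℝ)) :
    1 - 1 / K ≤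
      ((Finset.univ.filter
          (fun z : Fin T → S => k ≤ (Finset.image z Finset.univ).card)).card : ℝ)
        / (M : ℝ) ^ T := by
  subst hM
  set M := Fintype.card S
  have hKpos : 0 < K := by linarith
  have hMpos : (0 : ℝ) < M := by exact_mod_cast Nat.zero_lt_of_lt hkM
  have hTK' : K * k * M ≤ T * (M - k) := by
    rw [div_le_iff₀ (by rw [sub_pos, div_lt_one hMpos]; exact_mod_cast hkM)] at hTK
    calc K * k * M ≤ T * (1 - k / M) * M := by gcongr
      _ = T * (M - k) := by field_simp
  have hBad := mul_card_filter_card_image_lt_le hkM hT hKpos.le hTK'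
  have hsplit := card_filter_add_card_filter_not (s := (univ : Finset (Fin T → S)))
    fun z => k ≤ #(image z univ)
  simp only [not_le, card_univ, Fintype.card_fun, Fintype.card_fin] at hsplit
  set Bad := #{z : Fin T → S | #(image z univ) < k}
  have hsplitR : (#{z : Fin T → S | k ≤ #(image z univ)} : ℝ) + Bad = M ^ T := by
    exact_mod_cast hsplit
  have hBad' : (Bad : ℝ) ≤ M ^ T / K := by
    rw [le_div_iff₀ hKpos]
    linarith
  rw [le_div_iff₀ (pow_pos hMpos T)]
  calc (1 - 1 / K) * M ^ T = M ^ T - M ^ T / K := by ring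
    _ ≤ #{z : Fin T → S | k ≤ #(image z univ)} := by linarith

/-- If `Z_1, …, Z_T` are i.i.d. uniform on a finite set `S` of size `M`, `0 < k < M`,
`K ≥ 1` and `T ≥ K·k/(1 - k/M)`, then the probability (computed by counting, since the
joint distribution of `(Z_1, …, Z_T)` is uniform over `S^T`) that the number of distinct
values among `Z_1, …, Z_T` is at least `k` is at least `1 - 1/K`. -/
theorem stmt3 {S : Type*} [Fintype S] [DecidableEq S]
    (M : ℕ) (hM : Fintype.card S = M)
    (k : ℕ) (hk : 0 < k) (hkM : k < M)
    (K : ℝ) (hK : 1 ≤ K)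
    (T : ℕ) (hT : 0 < T) (hTK : K * (k : ℝ) / (1 - (k : ℝ) / (M : ℝ)) ≤ (T : ℝ)) :
    1 - 1 / K ≤
      ((Finset.univ.filter
          (fun z : Fin T → S => k ≤ (Finset.image z Finset.univ).card)).card : ℝ)
        / (M : ℝ) ^ T :=
  stmt3_general M hM k hkM K hK T hT hTK
end

section
/- Let D = {D_n}_{n∈ℕ} be an arbitrary sequence of probability distributions, where D_n is a distribution on {0,1}^n, and let p and q be polynomials with positive integer values on ℕ. Then there exists a constant c ∈ ℕ such that, setting p'(n) = 2 p(n) q(n) + c, for every n ∈ ℕ the following holds: if x_1, …, x_{p(n)} are i.i.d. samples from D_n and z_1, …, z_{p'(n)} are i.i.d. samples from the uniform distribution U_n on {0,1}^n (independent of the x's), then P( N(x^{p(n)}) ≤ N(z^{p'(n)}) ) ≥ 1 − 1/q(n). -/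
/-!
The `x`'s take at most `min (p n) (2 ^ n)` distinct values, so on the complementary event the
`z`'s take at most `k = min (p n) (2 ^ n) - 1` values. A union bound over the `k`-subsets of
`{0,1}^n` bounds this by `C(2^n, k) (k / 2^n)^(p' n)`. Once `2 q(n) p(n)^2 ≤ 2^n`, which holds for
all but finitely many `n`, this is at most `1 / q n` whatever `c` is; for each of the finitely
many remaining `n` it tends to `0` as `c → ∞`, and this fixes `c`.
-/

open MeasureTheory Filter Asymptotics Finset

lemma Polynomial.eventually_eval_le_two_pow (r : Polynomial ℕ) :
    ∀ᶠ n : ℕ in atTop, r.eval n ≤ 2 ^ n := by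
  set r' := r.map (Nat.castRingHom ℝ)
  have hO : (fun n : ℕ ↦ r'.eval (n : ℝ)) =O[atTop] fun n : ℕ ↦ (n : ℝ) ^ r'.natDegree := by
    have hdeg : r'.degree ≤ (X ^ r'.natDegree : Polynomial ℝ).degree := by
      rw [degree_X_pow]; exact degree_le_natDegree
    simpa [Function.comp_def] using
      (isBigO_atTop_of_degree_le _ _ hdeg).comp_tendsto tendsto_natCast_atTop_atTop
  filter_upwards [(hO.trans_isLittleO
    (isLittleO_pow_const_const_pow_of_one_lt _ one_lt_two)).bound one_pos] with n hn
  simp only [r', eval_natCast_map, Nat.coe_castRingHom, Real.norm_natCast, norm_pow,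
    Real.norm_two, one_mul] at hn
  exact_mod_cast hn

lemma Nat.choose_mul_pow_mul_le_pow {s k b q : ℕ} (hs : 2 * q * (k + 1) ^ 2 ≤ s)
    (hb : 2 * (k + 1) * q ≤ b) : s.choose k * k ^ b * q ≤ s ^ b := by
  rcases Nat.eq_zero_or_pos q with rfl | hq
  · simp
  have hkb : 2 * (k + 1) ≤ b := le_trans (Nat.le_mul_of_pos_right _ hq) hb
  have hpow : k ^ b * q ≤ s ^ (b - k) :=
    calc k ^ b * q ≤ (k + 1) ^ (2 * (b - k)) * (2 * q) ^ (b - k) := by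
          refine Nat.mul_le_mul ?_ ?_
          · exact (Nat.pow_le_pow_left k.le_succ b).trans
              (Nat.pow_le_pow_right k.succ_pos (by omega))
          · exact le_trans (by omega) (Nat.le_self_pow (by omega) _)
      _ = (2 * q * (k + 1) ^ 2) ^ (b - k) := by rw [pow_mul, ← mul_pow, mul_comm]
      _ ≤ s ^ (b - k) := Nat.pow_le_pow_left hs _
  calc s.choose k * k ^ b * q ≤ s ^ k * s ^ (b - k) := by
        rw [mul_assoc]; exact Nat.mul_le_mul (s.choose_le_pow k) hpow
    _ = s ^ b := by rw [← pow_add, Nat.add_sub_cancel' (by omega)]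

lemma choose_mul_div_pow_le_inv {s k b q : ℕ} (hq : 0 < q) (hs : 2 * q * (k + 1) ^ 2 ≤ s)
    (hb : 2 * (k + 1) * q ≤ b) : (s.choose k : ℝ) * ((k : ℝ) / s) ^ b ≤ 1 / q := by
  have hs0 : 0 < s := lt_of_lt_of_le (by positivity) hs
  rw [div_pow, ← mul_div_assoc,
    div_le_div_iff₀ (pow_pos (by exact_mod_cast hs0) _) (by exact_mod_cast hq), one_mul]
  exact_mod_cast Nat.choose_mul_pow_mul_le_pow hs hb

lemma tendsto_choose_mul_div_pow_atTop {s k : ℕ} (hk : k < s) :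
    Tendsto (fun b : ℕ ↦ (s.choose k : ℝ) * ((k : ℝ) / s) ^ b) atTop (nhds 0) := by
  have hlt : (k : ℝ) / s < 1 :=
    (div_lt_one (by exact_mod_cast k.zero_le.trans_lt hk)).2 (by exact_mod_cast hk)
  simpa using (tendsto_pow_atTop_nhds_zero_of_lt_one (by positivity) hlt).const_mul _

lemma measureReal_pi_uniform_card_image_le {ι α : Type*} [Fintype ι] [Fintype α] [DecidableEq α]
    [Nonempty α] [MeasurableSpace α] [DiscreteMeasurableSpace α] {k : ℕ}
    (hk : k ≤ Fintype.card α) :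
    (Measure.pi fun _ : ι ↦ (PMF.uniformOfFintype α).toMeasure).real {z | #(univ.image z) ≤ k}
      ≤ (Fintype.card α).choose k * ((k : ℝ) / Fintype.card α) ^ Fintype.card ι := by
  set ν := Measure.pi fun _ : ι ↦ (PMF.uniformOfFintype α).toMeasure
  have hcover : {z : ι → α | #(univ.image z) ≤ k} ⊆
      ⋃ T ∈ powersetCard k (univ : Finset α), Set.univ.pi fun _ ↦ (T : Set α) := by
    intro z hz
    obtain ⟨T, hzT, hT⟩ := exists_superset_card_eq hz hk
    exact Set.mem_biUnion (mem_powersetCard_univ.2 hT)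
      fun i _ ↦ hzT (mem_image_of_mem z (mem_univ i))
  have hbox : ∀ T ∈ powersetCard k (univ : Finset α),
      ν.real (Set.univ.pi fun _ ↦ (T : Set α)) = ((k : ℝ) / Fintype.card α) ^ Fintype.card ι := by
    intro T hT
    rw [measureReal_def, Measure.pi_pi, PMF.toMeasure_uniformOfFintype_apply _ .of_discrete]
    simp [(mem_powersetCard_univ.1 hT), ENNReal.toReal_div]
  calc ν.real _
      ≤ ν.real (⋃ T ∈ powersetCard k (univ : Finset α), Set.univ.pi fun _ ↦ (T : Set α)) :=
        measureReal_mono hcover (measure_ne_top _ _)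
    _ ≤ ∑ T ∈ powersetCard k (univ : Finset α), ν.real (Set.univ.pi fun _ ↦ (T : Set α)) :=
        measureReal_biUnion_finset_le _ _
    _ = _ := by rw [sum_congr rfl hbox, sum_const, card_powersetCard, card_univ, nsmul_eq_mul]

lemma one_sub_le_measureReal_prod {X Y : Type*} [MeasurableSpace X] [MeasurableSpace Y]
    (μ : Measure X) (ν : Measure Y) [IsProbabilityMeasure μ] [IsProbabilityMeasure ν]
    {E : Set (X × Y)} {S : Set Y} (hE : ∀ x y, (x, y) ∉ E → y ∈ S) {ε : ℝ}
    (hS : ν.real S ≤ ε) : 1 - ε ≤ (μ.prod ν).real E := by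
  have hEc : (μ.prod ν).real Eᶜ ≤ ε :=
    calc (μ.prod ν).real Eᶜ ≤ (μ.prod ν).real (Set.univ ×ˢ S) :=
          measureReal_mono fun xy hxy ↦ ⟨trivial, hE xy.1 xy.2 hxy⟩
      _ = ν.real S := by rw [measureReal_prod_prod, probReal_univ, one_mul]
      _ ≤ ε := hS
  have := measureReal_union_le (μ := μ.prod ν) E Eᶜ
  rw [Set.union_compl_self, probReal_univ] at this
  linarith

/-- For any sequence of distributions `D_n` on `{0,1}^n` and any polynomials `p, q` with
positive values on `ℕ`, there is a constant `c` such that with `p'(n) = 2 p(n) q(n) + c`,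
for every `n`, if `x_1, …, x_{p(n)}` are i.i.d. samples from `D_n` and
`z_1, …, z_{p'(n)}` are i.i.d. uniform samples from `{0,1}^n` (independent of the `x`'s),
then the number of distinct elements among the `x`'s is at most the number of distinct
elements among the `z`'s with probability at least `1 - 1/q(n)`. -/
theorem stmt4 (D : ∀ n : ℕ, PMF (Fin n → Bool)) (p q : Polynomial ℕ)
    (hp : ∀ n : ℕ, 0 < p.eval n) (hq : ∀ n : ℕ, 0 < q.eval n) :
    ∃ c : ℕ, ∀ n : ℕ,
      1 - 1 / ((q.eval n : ℕ) : ℝ) ≤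
        (((Measure.pi (fun _ : Fin (p.eval n) => (D n).toMeasure)).prod
            (Measure.pi (fun _ : Fin (2 * p.eval n * q.eval n + c) =>
              (PMF.uniformOfFintype (Fin n → Bool)).toMeasure)))
          {xz | (Finset.image xz.1 Finset.univ).card ≤
                (Finset.image xz.2 Finset.univ).card}).toReal := by
  have hcard (n : ℕ) : Fintype.card (Fin n → Bool) = 2 ^ n := by simp
  let k (n : ℕ) := min (p.eval n) (2 ^ n) - 1
  have hk (n : ℕ) : k n < 2 ^ n := by
    have := hp n; have := n.one_le_two_pow; dsimp only [k]; omega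
  obtain ⟨N, hN⟩ := eventually_atTop.1 (Polynomial.eventually_eval_le_two_pow (2 * q * p ^ 2))
  obtain ⟨c, hc⟩ : ∃ c : ℕ, ∀ n ∈ range N, ((2 ^ n).choose (k n) : ℝ) *
      ((k n : ℝ) / (2 ^ n : ℕ)) ^ (2 * p.eval n * q.eval n + c) ≤ 1 / q.eval n := by
    refine Eventually.exists (f := atTop) ((eventually_all_finset _).2 fun n _ ↦ ?_)
    have hε : (0 : ℝ) < 1 / q.eval n := by have := hq n; positivity
    filter_upwards [((tendsto_choose_mul_div_pow_atTop (hk n)).comp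
      (tendsto_add_atTop_nat (2 * p.eval n * q.eval n))).eventually_lt_const hε] with c hc
    rw [add_comm]
    exact hc.le
  refine ⟨c, fun n ↦ one_sub_le_measureReal_prod _ _ (S := {z | #(univ.image z) ≤ k n}) ?_ ?_⟩
  · intro x z hxz
    have h₁ : #(univ.image x) ≤ p.eval n := card_image_le.trans (by simp)
    have h₂ : #(univ.image x) ≤ 2 ^ n := hcard n ▸ card_le_univ _
    simp only [Set.mem_ofPred_eq, not_le] at hxz ⊢
    dsimp only [k]
    omega
  · refine (measureReal_pi_uniform_card_image_le (hcard n ▸ (hk n).le)).trans ?_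
    rw [hcard, Fintype.card_fin]
    by_cases hn : n < N
    · exact hc n (mem_range.2 hn)
    · have hbig : 2 * q.eval n * p.eval n ^ 2 ≤ 2 ^ n := by simpa using hN n (not_lt.1 hn)
      have hpk : k n + 1 = p.eval n := by
        have := hq n; have := hp n; have : p.eval n ≤ 2 ^ n := by nlinarith
        dsimp only [k]
        omega
      exact choose_mul_div_pow_le_inv (hq n) (by rwa [hpk]) (by rw [hpk]; omega)
end

section
/- Fix n, p ∈ ℕ and α ∈ [0,1]. Let c be a uniformly random Boolean function from {0,1}^n to {0,1} (uniform over all 2^{2^n} such functions), let x_1, …, x_p be i.i.d. uniform samples from {0,1}^n independent of c, and let T^c_p = ((x_1, c(x_1)), …, (x_p, c(x_p))). Then for every randomized estimator W, i.e., every map assigning to each element of ({0,1}^n × {0,1})^p a probability distribution over Boolean functions on {0,1}^n, it holds that P( W(T^c_p) ∈ B(c, α) ) ≤ ( max_{c'} |B(c', α)| ) · 2^{p − 2^n}, where the maximum is over all Boolean functions c' on {0,1}^n and the probability is over c, the samples x_1, …, x_p, and the internal randomness of W. -/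
open scoped Classical

/-- The set `B(c, α)` of Boolean functions on `{0,1}^n` differing from `c`
on at most `α·2^n` inputs. -/
noncomputable def ball (n : ℕ) (c : (Fin n → Bool) → Bool) (α : ℝ) :
    Finset ((Fin n → Bool) → Bool) :=
  Finset.univ.filter
    (fun c' => ((Finset.univ.filter (fun x : Fin n → Bool => c' x ≠ c x)).card : ℝ) ≤ α * 2 ^ n)

/-- The training set `T^c_p = ((x_1, c(x_1)), …, (x_p, c(x_p)))`. -/
def trainSet (n p : ℕ) (c : (Fin n → Bool) → Bool) (x : Fin p → (Fin n → Bool)) :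
    Fin p → ((Fin n → Bool) × Bool) :=
  fun i => (x i, c (x i))

/-- The probability, over a uniformly random Boolean function `c` on `{0,1}^n`, over `p`
i.i.d. uniform samples `x_1, …, x_p` from `{0,1}^n`, and over the internal randomness of
the randomized estimator `W`, that `W(T^c_p) ∈ B(c, α)`. -/
noncomputable def probEstimator (n p : ℕ) (α : ℝ)
    (W : (Fin p → ((Fin n → Bool) × Bool)) → PMF ((Fin n → Bool) → Bool)) : ℝ :=
  (∑ c : (Fin n → Bool) → Bool, ∑ x : Fin p → (Fin n → Bool),
      ∑ c' ∈ ball n c α, ((W (trainSet n p c x)) c').toReal)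
    / ((Fintype.card ((Fin n → Bool) → Bool) : ℝ) * (Fintype.card (Fin n → Bool) : ℝ) ^ p)

lemma pmf_sum_toReal_le_one {α : Type*} [Fintype α] (μ : PMF α) :
    ∑ a, (μ a).toReal ≤ 1 := by
  have h := μ.tsum_coe
  rw [tsum_fintype] at h
  rw [← ENNReal.toReal_sum (fun a _ => (μ.apply_lt_top a).ne), h, ENNReal.toReal_one]

lemma ball_symm (n : ℕ) (α : ℝ) (c c' : (Fin n → Bool) → Bool) :
    c' ∈ ball n c α ↔ c ∈ ball n c' α := by
  unfold ball
  simp only [Finset.mem_filter, Finset.mem_univ, true_and]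
  have h : (Finset.univ.filter (fun x : Fin n → Bool => c' x ≠ c x))
      = (Finset.univ.filter (fun x : Fin n → Bool => c x ≠ c' x)) := by
    apply Finset.filter_congr
    intro x _
    exact ne_comm
  rw [h]

lemma key_bound (n p : ℕ) (α : ℝ)
    (W : (Fin p → ((Fin n → Bool) × Bool)) → PMF ((Fin n → Bool) → Bool))
    (x : Fin p → (Fin n → Bool)) :
    (∑ c : (Fin n → Bool) → Bool,
        ∑ c' ∈ ball n c α, ((W (trainSet n p c x)) c').toReal)
      ≤ ((Finset.univ.sup
            (fun c' : (Fin n → Bool) → Bool => (ball n c' α).card) : ℕ) : ℝ) * 2 ^ p := by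
  set M : ℝ := ((Finset.univ.sup
      (fun c' : (Fin n → Bool) → Bool => (ball n c' α).card) : ℕ) : ℝ) with hM
  have hM0 : 0 ≤ M := Nat.cast_nonneg _
  -- partition the sum over `c` according to the values of `c` on the sample points
  have hfib := Finset.sum_fiberwise (Finset.univ : Finset ((Fin n → Bool) → Bool))
    (fun c => (fun i => c (x i) : Fin p → Bool))
    (fun c => ∑ c' ∈ ball n c α, ((W (trainSet n p c x)) c').toReal)
  rw [← hfib]
  -- it suffices to bound each fiber sum by M
  have hcard : (Fintype.card (Fin p → Bool) : ℝ) = 2 ^ p := by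
    simp [Fintype.card_fun]
  calc (∑ v : Fin p → Bool, ∑ c ∈ Finset.univ.filter
          (fun c : (Fin n → Bool) → Bool => (fun i => c (x i)) = v),
          ∑ c' ∈ ball n c α, ((W (trainSet n p c x)) c').toReal)
      ≤ ∑ _v : Fin p → Bool, M := by
        apply Finset.sum_le_sum
        intro v _
        -- on this fiber the training set is constant
        have htrain : ∀ c ∈ Finset.univ.filter
            (fun c : (Fin n → Bool) → Bool => (fun i => c (x i)) = v),
            trainSet n p c x = (fun i => (x i, v i)) := by
          intro c hc
          simp only [Finset.mem_filter] at hc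
          funext i
          simp [trainSet, ← hc.2]
        set T : Fin p → ((Fin n → Bool) × Bool) := fun i => (x i, v i) with hT
        have hrw : (∑ c ∈ Finset.univ.filter
              (fun c : (Fin n → Bool) → Bool => (fun i => c (x i)) = v),
              ∑ c' ∈ ball n c α, ((W (trainSet n p c x)) c').toReal)
            = ∑ c ∈ Finset.univ.filter
              (fun c : (Fin n → Bool) → Bool => (fun i => c (x i)) = v),
              ∑ c' ∈ ball n c α, ((W T) c').toReal := by
          apply Finset.sum_congr rfl
          intro c hc
          rw [htrain c hc]
        rw [hrw]
        -- swap the sums and bound the count of `c` in the fiber with `c' ∈ ball c`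
        have hswap : (∑ c ∈ Finset.univ.filter
              (fun c : (Fin n → Bool) → Bool => (fun i => c (x i)) = v),
              ∑ c' ∈ ball n c α, ((W T) c').toReal)
            = ∑ c' : (Fin n → Bool) → Bool,
              ∑ c ∈ Finset.univ.filter
                (fun c : (Fin n → Bool) → Bool => (fun i => c (x i)) = v),
                if c' ∈ ball n c α then ((W T) c').toReal else 0 := by
          rw [Finset.sum_comm]
          apply Finset.sum_congr rfl
          intro c _
          rw [← Finset.sum_filter]
          apply Finset.sum_congr _ (fun _ _ => rfl)
          ext c'
          simp [ball]
        rw [hswap]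
        have hbd : ∀ c' : (Fin n → Bool) → Bool,
            (∑ c ∈ Finset.univ.filter
              (fun c : (Fin n → Bool) → Bool => (fun i => c (x i)) = v),
              if c' ∈ ball n c α then ((W T) c').toReal else 0)
            ≤ M * ((W T) c').toReal := by
          intro c'
          rw [← Finset.sum_filter, Finset.sum_const, nsmul_eq_mul]
          gcongr
          calc (((Finset.univ.filter
                (fun c : (Fin n → Bool) → Bool => (fun i => c (x i)) = v)).filter
                (fun c => c' ∈ ball n c α)).card : ℝ)
              ≤ ((Finset.univ.filter
                  (fun c : (Fin n → Bool) → Bool => c ∈ ball n c' α)).card : ℝ) := by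
                have : ((Finset.univ.filter
                    (fun c : (Fin n → Bool) → Bool => (fun i => c (x i)) = v)).filter
                    (fun c => c' ∈ ball n c α))
                    ⊆ Finset.univ.filter
                      (fun c : (Fin n → Bool) → Bool => c ∈ ball n c' α) := by
                  intro c hc
                  simp only [Finset.mem_filter, Finset.mem_univ, true_and] at hc ⊢
                  exact (ball_symm n α c c').mp hc.2
                exact_mod_cast Finset.card_le_card this
            _ ≤ M := by
                rw [Finset.filter_mem_eq_inter, Finset.univ_inter]
                exact_mod_cast Nat.cast_le.mpr
                  (Finset.le_sup (f := fun c' : (Fin n → Bool) → Bool => (ball n c' α).card)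
                    (Finset.mem_univ c'))
        calc (∑ c' : (Fin n → Bool) → Bool,
              ∑ c ∈ Finset.univ.filter
                (fun c : (Fin n → Bool) → Bool => (fun i => c (x i)) = v),
                if c' ∈ ball n c α then ((W T) c').toReal else 0)
            ≤ ∑ c' : (Fin n → Bool) → Bool, M * ((W T) c').toReal :=
              Finset.sum_le_sum (fun c' _ => hbd c')
          _ = M * ∑ c' : (Fin n → Bool) → Bool, ((W T) c').toReal := by
              rw [Finset.mul_sum]
          _ ≤ M * 1 := by
              gcongr
              exact pmf_sum_toReal_le_one (W T)
          _ = M := mul_one M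
    _ = (Fintype.card (Fin p → Bool) : ℝ) * M := by
        rw [Finset.sum_const, Finset.card_univ, nsmul_eq_mul]
    _ = M * 2 ^ p := by rw [hcard, mul_comm]

/-- For every randomized estimator `W`,
`P(W(T^c_p) ∈ B(c, α)) ≤ (max_{c'} |B(c', α)|) · 2^{p - 2^n}`. -/
theorem stmt6 (n p : ℕ) (α : ℝ) (hα0 : 0 ≤ α) (hα1 : α ≤ 1)
    (W : (Fin p → ((Fin n → Bool) × Bool)) → PMF ((Fin n → Bool) → Bool)) :
    probEstimator n p α W ≤
      ((Finset.univ.sup (fun c' : (Fin n → Bool) → Bool => (ball n c' α).card) : ℕ) : ℝ) *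
        (2 : ℝ) ^ ((p : ℝ) - (2 : ℝ) ^ n) := by
  set M : ℝ := ((Finset.univ.sup
      (fun c' : (Fin n → Bool) → Bool => (ball n c' α).card) : ℕ) : ℝ) with hM
  have hM0 : 0 ≤ M := Nat.cast_nonneg _
  -- numerator bound
  have hnum : (∑ c : (Fin n → Bool) → Bool, ∑ x : Fin p → (Fin n → Bool),
      ∑ c' ∈ ball n c α, ((W (trainSet n p c x)) c').toReal)
      ≤ ((2 : ℝ) ^ n) ^ p * (M * 2 ^ p) := by
    rw [Finset.sum_comm]
    calc (∑ x : Fin p → (Fin n → Bool), ∑ c : (Fin n → Bool) → Bool,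
          ∑ c' ∈ ball n c α, ((W (trainSet n p c x)) c').toReal)
        ≤ ∑ _x : Fin p → (Fin n → Bool), M * 2 ^ p :=
          Finset.sum_le_sum (fun x _ => key_bound n p α W x)
      _ = (Fintype.card (Fin p → (Fin n → Bool)) : ℝ) * (M * 2 ^ p) := by
          rw [Finset.sum_const, Finset.card_univ, nsmul_eq_mul]
      _ = ((2 : ℝ) ^ n) ^ p * (M * 2 ^ p) := by
          congr 1
          simp [Fintype.card_fun]
  -- rewrite the rpow
  have hrpow : (2 : ℝ) ^ ((p : ℝ) - (2 : ℝ) ^ n)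
      = 2 ^ p / 2 ^ (2 ^ n : ℕ) := by
    rw [show ((2 : ℝ) ^ n) = ((2 ^ n : ℕ) : ℝ) by push_cast; ring,
      Real.rpow_sub (by norm_num), Real.rpow_natCast, Real.rpow_natCast]
  have hcard1 : (Fintype.card ((Fin n → Bool) → Bool) : ℝ) = 2 ^ (2 ^ n : ℕ) := by
    simp [Fintype.card_fun]
  have hcard2 : (Fintype.card (Fin n → Bool) : ℝ) = 2 ^ n := by
    simp [Fintype.card_fun]
  rw [probEstimator, hcard1, hcard2, hrpow]
  rw [div_le_iff₀ (by positivity)]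
  calc (∑ c : (Fin n → Bool) → Bool, ∑ x : Fin p → (Fin n → Bool),
        ∑ c' ∈ ball n c α, ((W (trainSet n p c x)) c').toReal)
      ≤ ((2 : ℝ) ^ n) ^ p * (M * 2 ^ p) := hnum
    _ = M * (2 ^ p / 2 ^ (2 ^ n : ℕ)) * ((2 : ℝ) ^ (2 ^ n : ℕ) * ((2 : ℝ) ^ n) ^ p) := by
        field_simp
end
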